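/- arXiv:2009.11688 — 4 statements merged into one kernel-verified Lean document; each statement's English description precedes it below -/
import Mathlib

section
/- For H ∈ (0,1), θ > 0, σ ∈ ℝ and t ≥ s ≥ 0 define R_H(t,s) = (Hσ²/2) [ −e^{(s−t)/θ} ∫₀^{t−s} e^{z/θ} z^{2H−1} dz + e^{(t−s)/θ} ∫_{t−s}^{t} e^{−z/θ} z^{2H−1} dz − e^{−(t+s)/θ} ∫_{s}^{t} e^{z/θ} z^{2H−1} dz + e^{(s−t)/θ} ∫₀^{s} e^{−z/θ} z^{2H−1} dz + 2 e^{−(t+s)/θ} ∫₀^{t} e^{z/θ} z^{2H−1} dz ], extended to all t,s ≥ 0 by symmetry R_H(t,s) = R_H(s,t). Then the map (H, t, s) ↦ R_H(t,s) is continuous on (0,1) × [0,∞) × [0,∞). -/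
open MeasureTheory Real Set

/-- The Wiener-integral form of the fOU covariance, for `t ≥ s`. -/
noncomputable def RHaux (θ σ H t s : ℝ) : ℝ :=
  (H * σ^2 / 2) *
    (-(Real.exp ((s-t)/θ)) * (∫ z in (0:ℝ)..(t-s), Real.exp (z/θ) * z ^ (2*H-1))
      + Real.exp ((t-s)/θ) * (∫ z in (t-s)..t, Real.exp (-z/θ) * z ^ (2*H-1))
      - Real.exp (-(t+s)/θ) * (∫ z in s..t, Real.exp (z/θ) * z ^ (2*H-1))
      + Real.exp ((s-t)/θ) * (∫ z in (0:ℝ)..s, Real.exp (-z/θ) * z ^ (2*H-1))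
      + 2 * Real.exp (-(t+s)/θ) * (∫ z in (0:ℝ)..t, Real.exp (z/θ) * z ^ (2*H-1)))

/-- The covariance function of the fOU process, extended to all `t, s ≥ 0` by symmetry. -/
noncomputable def RH (θ σ H t s : ℝ) : ℝ :=
  if s ≤ t then RHaux θ σ H t s else RHaux θ σ H s t

/-!
Splitting each `∫_a^b` as `∫_0^b - ∫_0^a`, `R_H(t, s)` becomes a continuous expression in
exponentials and in primitives `(r, x) ↦ ∫_0^x g z * z ^ r dz` with `g` continuous and
`r = 2H - 1 > -1`. These primitives are jointly continuous by dominated convergence: for `r` near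
`r₀ > -1` one has `|z ^ r| ≤ |z| ^ r₁ + |z| ^ r₂` with `-1 < r₁ < r₀ < r₂`, and `|z| ^ r₁` is
integrable near `0`.
-/

open Filter Topology Interval

theorem Real.rpow_le_rpow_add_rpow {x a b c : ℝ} (hx : 0 < x) (hab : a ≤ b) (hbc : b ≤ c) :
    x ^ b ≤ x ^ a + x ^ c := by
  rcases le_total x 1 with hx1 | hx1
  · exact le_add_of_le_of_nonneg (rpow_le_rpow_of_exponent_ge hx hx1 hab) (rpow_nonneg hx.le _)
  · exact le_add_of_nonneg_of_le (rpow_nonneg hx.le _) (rpow_le_rpow_of_exponent_le hx1 hbc)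

theorem intervalIntegrable_abs_rpow {r : ℝ} (hr : -1 < r) (a b : ℝ) :
    IntervalIntegrable (fun x => |x| ^ r) volume a b := by
  have nonneg : ∀ c, 0 ≤ c → IntervalIntegrable (fun x => |x| ^ r) volume 0 c := fun c hc =>
    (intervalIntegral.intervalIntegrable_rpow' hr).congr fun x hx => by
      rw [uIoc_of_le hc] at hx
      simp only [abs_of_pos hx.1]
  have from_zero : ∀ c, IntervalIntegrable (fun x => |x| ^ r) volume 0 c := fun c => by
    rcases le_total 0 c with hc | hc
    · exact nonneg c hc
    · rw [IntervalIntegrable.iff_comp_neg]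
      simpa only [abs_neg, neg_zero] using nonneg (-c) (neg_nonneg.2 hc)
  exact (from_zero a).symm.trans (from_zero b)

theorem intervalIntegrable_mul_rpow {g : ℝ → ℝ} (hg : Continuous g) {r : ℝ} (hr : -1 < r)
    (a b : ℝ) : IntervalIntegrable (fun z => g z * z ^ r) volume a b :=
  (intervalIntegral.intervalIntegrable_rpow' hr).continuousOn_mul hg.continuousOn

theorem continuousAt_primitive_mul_rpow {g : ℝ → ℝ} (hg : Continuous g) {r₀ x₀ : ℝ}
    (hr₀ : -1 < r₀) :
    ContinuousAt (fun p : ℝ × ℝ => ∫ z in (0:ℝ)..p.2, g z * z ^ p.1) (r₀, x₀) := by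
  set M := |x₀| + 1
  have hM : 0 < M := by positivity
  obtain ⟨C, hC⟩ :=
    (isCompact_Icc (a := -M) (b := M)).exists_bound_of_continuousOn hg.continuousOn
  have hr₁ : -1 < (r₀ - 1) / 2 := by linarith
  have hzero : ∀ᵐ z ∂(volume.restrict (Ι (-M) M)), z ≠ 0 :=
    ae_restrict_of_ae (compl_mem_ae_iff.2 Real.volume_singleton)
  refine intervalIntegral.continuousAt_parametric_primitive_of_dominated
    (F := fun r z => g z * z ^ r)
    (fun z => C * (|z| ^ ((r₀ - 1) / 2) + |z| ^ (r₀ + 1))) (-M) M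
    (fun r => (hg.measurable.mul (measurable_id.pow_const r)).aestronglyMeasurable) ?_
    (((intervalIntegrable_abs_rpow hr₁ _ _).add
      (intervalIntegrable_abs_rpow (by linarith) _ _)).const_mul C) ?_
    ⟨neg_lt_zero.2 hM, hM⟩ (abs_lt.1 (lt_add_one |x₀|))
    Real.volume_singleton
  · filter_upwards [Ioo_mem_nhds (show (r₀ - 1) / 2 < r₀ by linarith) (lt_add_one r₀)]
      with r hr
    filter_upwards [hzero, ae_restrict_mem measurableSet_uIoc] with z hz hzI
    rw [uIoc_of_le (by linarith)] at hzI
    rw [norm_mul]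
    exact mul_le_mul (hC z (Ioc_subset_Icc_self hzI))
      ((abs_rpow_le_abs_rpow z r).trans
        (Real.rpow_le_rpow_add_rpow (abs_pos.2 hz) hr.1.le hr.2.le))
      (norm_nonneg _) ((norm_nonneg _).trans (hC z (Ioc_subset_Icc_self hzI)))
  · filter_upwards [hzero] with z hz
    exact continuousAt_const.mul (Real.continuousAt_const_rpow hz)

theorem ContinuousAt.intervalIntegral_mul_rpow {X : Type*} [TopologicalSpace X] {g : ℝ → ℝ}
    (hg : Continuous g) {a b r : X → ℝ} {x : X} (ha : ContinuousAt a x) (hb : ContinuousAt b x)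
    (hr : ContinuousAt r x) (hrx : -1 < r x) :
    ContinuousAt (fun y => ∫ z in a y..b y, g z * z ^ r y) x := by
  have primitive : ∀ c : X → ℝ, ContinuousAt c x →
      ContinuousAt (fun y => ∫ z in (0:ℝ)..c y, g z * z ^ r y) x := fun c hc =>
    (continuousAt_primitive_mul_rpow hg hrx).comp₂ hr hc
  refine ((primitive b hb).sub (primitive a ha)).congr ?_
  filter_upwards [hr.eventually (lt_mem_nhds hrx)] with y hy
  exact intervalIntegral.integral_interval_sub_left
    (intervalIntegrable_mul_rpow hg hy _ _) (intervalIntegrable_mul_rpow hg hy _ _)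

theorem continuousAt_RHaux (θ σ : ℝ) {p : ℝ × ℝ × ℝ} (hp : 0 < p.1) :
    ContinuousAt (fun q : ℝ × ℝ × ℝ => RHaux θ σ q.1 q.2.1 q.2.2) p := by
  have integral : ∀ {g : ℝ → ℝ} {a b : ℝ × ℝ × ℝ → ℝ}, Continuous g → Continuous a →
      Continuous b → ContinuousAt (fun q => ∫ z in a q..b q, g z * z ^ (2 * q.1 - 1)) p :=
    fun hg ha hb => ContinuousAt.intervalIntegral_mul_rpow hg ha.continuousAt hb.continuousAt
      (by fun_prop) (by linarith)
  unfold RHaux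
  refine ContinuousAt.mul (by fun_prop) ?_
  refine ((((?_ : ContinuousAt _ p).add ?_).sub ?_).add ?_).add ?_ <;>
    exact ContinuousAt.mul (by fun_prop) (integral (by fun_prop) (by fun_prop) (by fun_prop))

theorem RH_eq_RHaux_max_min (θ σ H t s : ℝ) :
    RH θ σ H t s = RHaux θ σ H (max t s) (min t s) := by
  by_cases h : s ≤ t
  · rw [RH, if_pos h, max_eq_left h, min_eq_right h]
  · rw [RH, if_neg h, max_eq_right (not_le.1 h).le, min_eq_left (not_le.1 h).le]

theorem continuousAt_RH (θ σ : ℝ) {p : ℝ × ℝ × ℝ} (hp : 0 < p.1) :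
    ContinuousAt (fun q : ℝ × ℝ × ℝ => RH θ σ q.1 q.2.1 q.2.2) p := by
  simp only [RH_eq_RHaux_max_min]
  exact (continuousAt_RHaux θ σ (p := (p.1, max p.2.1 p.2.2, min p.2.1 p.2.2)) hp).comp
    (f := fun q : ℝ × ℝ × ℝ => (q.1, max q.2.1 q.2.2, min q.2.1 q.2.2)) (by fun_prop)

theorem RH_continuousOn_general (θ σ : ℝ) :
    ContinuousOn (fun p : ℝ × ℝ × ℝ => RH θ σ p.1 p.2.1 p.2.2)
      (Set.Ioo (0:ℝ) 1 ×ˢ Set.Ici (0:ℝ) ×ˢ Set.Ici (0:ℝ)) :=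
  fun _ hp => (continuousAt_RH θ σ hp.1.1).continuousWithinAt

/-- `(H,t,s) ↦ R_H(t,s)` is continuous on `(0,1) × [0,∞) × [0,∞)`. -/
theorem RH_continuousOn (θ σ : ℝ) (hθ : 0 < θ) :
    ContinuousOn (fun p : ℝ × ℝ × ℝ => RH θ σ p.1 p.2.1 p.2.2)
      (Set.Ioo (0:ℝ) 1 ×ˢ Set.Ici (0:ℝ) ×ˢ Set.Ici (0:ℝ)) :=
  RH_continuousOn_general θ σ
end

section
/- For H ∈ (0,1), θ > 0, σ ∈ ℝ and t ≥ s ≥ 0 define R_H(t,s) = (Hσ²/2) [ −e^{(s−t)/θ} ∫₀^{t−s} e^{z/θ} z^{2H−1} dz + e^{(t−s)/θ} ∫_{t−s}^{t} e^{−z/θ} z^{2H−1} dz − e^{−(t+s)/θ} ∫_{s}^{t} e^{z/θ} z^{2H−1} dz + e^{(s−t)/θ} ∫₀^{s} e^{−z/θ} z^{2H−1} dz + 2 e^{−(t+s)/θ} ∫₀^{t} e^{z/θ} z^{2H−1} dz ], extended to all t,s ≥ 0 by symmetry R_H(t,s) = R_H(s,t). Then for every (t,s) ∈ [0,∞)²,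 lim_{H → 1⁻} R_H(t,s) = σ²θ² (1 − e^{−s/θ})(1 − e^{−t/θ}). -/
open MeasureTheory Real Set

/-!
Since `z ^ p` is jointly continuous in `(z, p)` for `p > 0`, every integral in `R_H(t, s)`,
and hence `R_H(t, s)` itself, is continuous in `H` at `H = 1`: the one-sided limit is the value
`R_1(t, s)`. There all integrals are elementary, `θ e^{z/θ} (z - θ)` and `-θ e^{-z/θ} (z + θ)`
being antiderivatives of `e^{z/θ} z` and `e^{-z/θ} z`.
-/

theorem continuousOn_intervalIntegral_mul_rpow {g : ℝ → ℝ} (hg : Continuous g) (a b : ℝ) :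
    ContinuousOn (fun p : ℝ => ∫ z in a..b, g z * z ^ p) (Ioi 0) := by
  rw [continuousOn_iff_continuous_domRestrict]
  refine intervalIntegral.continuous_parametric_intervalIntegral_of_continuous'
    (f := fun (p : Ioi (0:ℝ)) z => g z * z ^ (p : ℝ)) ?_ a b
  refine (hg.comp continuous_snd).mul (continuous_iff_continuousAt.2 fun q => ?_)
  exact continuousAt_snd.rpow (continuous_subtype_val.comp continuous_fst).continuousAt
    (Or.inr q.1.2)

theorem continuousAt_intervalIntegral_mul_rpow_two_mul_sub_one {g : ℝ → ℝ} (hg : Continuous g)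
    (a b : ℝ) : ContinuousAt (fun H : ℝ => ∫ z in a..b, g z * z ^ (2 * H - 1)) 1 := by
  refine ContinuousAt.comp (f := fun H : ℝ => 2 * H - 1)
    (g := fun p => ∫ z in a..b, g z * z ^ p) ?_ (by fun_prop)
  exact (continuousOn_intervalIntegral_mul_rpow hg a b).continuousAt
    (Ioi_mem_nhds (by norm_num))

theorem continuousAt_RHaux_s6 (θ σ t s : ℝ) : ContinuousAt (fun H => RHaux θ σ H t s) 1 := by
  have hIp := continuousAt_intervalIntegral_mul_rpow_two_mul_sub_one
    (g := fun z => exp (z / θ)) (by fun_prop)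
  have hIm := continuousAt_intervalIntegral_mul_rpow_two_mul_sub_one
    (g := fun z => exp (-z / θ)) (by fun_prop)
  unfold RHaux
  fun_prop

theorem integral_exp_div_mul_self {θ : ℝ} (hθ : θ ≠ 0) (a b : ℝ) :
    ∫ z in a..b, exp (z / θ) * z =
      θ * exp (b / θ) * (b - θ) - θ * exp (a / θ) * (a - θ) := by
  refine intervalIntegral.integral_eq_sub_of_hasDerivAt
    (f := fun z => θ * exp (z / θ) * (z - θ)) (fun z _ => ?_)
    ((by fun_prop : Continuous fun z => exp (z / θ) * z).intervalIntegrable a b)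
  refine ((((hasDerivAt_id' z).div_const θ).exp.const_mul θ).mul
    ((hasDerivAt_id' z).sub_const θ)).congr_deriv ?_
  field_simp
  ring

theorem integral_exp_neg_div_mul_self {θ : ℝ} (hθ : θ ≠ 0) (a b : ℝ) :
    ∫ z in a..b, exp (-z / θ) * z =
      -θ * exp (-b / θ) * (b + θ) - -θ * exp (-a / θ) * (a + θ) := by
  refine intervalIntegral.integral_eq_sub_of_hasDerivAt
    (f := fun z => -θ * exp (-z / θ) * (z + θ)) (fun z _ => ?_)
    ((by fun_prop : Continuous fun z => exp (-z / θ) * z).intervalIntegrable a b)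
  refine ((((hasDerivAt_neg' z).div_const θ).exp.const_mul (-θ)).mul
    ((hasDerivAt_id' z).add_const θ)).congr_deriv ?_
  field_simp
  ring

theorem RHaux_one {θ : ℝ} (hθ : θ ≠ 0) (σ t s : ℝ) :
    RHaux θ σ 1 t s = σ ^ 2 * θ ^ 2 * (1 - exp (-s / θ)) * (1 - exp (-t / θ)) := by
  norm_num only [RHaux, rpow_one, integral_exp_div_mul_self hθ, integral_exp_neg_div_mul_self hθ]
  simp only [zero_div, exp_zero, sub_div, add_div, neg_div, exp_sub, exp_add, exp_neg]
  field_simp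
  ring

theorem RH_one {θ : ℝ} (hθ : θ ≠ 0) (σ t s : ℝ) :
    RH θ σ 1 t s = σ ^ 2 * θ ^ 2 * (1 - exp (-s / θ)) * (1 - exp (-t / θ)) := by
  unfold RH
  split_ifs <;> rw [RHaux_one hθ]
  ring

theorem continuousAt_RH_s6 (θ σ t s : ℝ) : ContinuousAt (fun H => RH θ σ H t s) 1 := by
  unfold RH
  split_ifs
  exacts [continuousAt_RHaux_s6 θ σ t s, continuousAt_RHaux_s6 θ σ s t]

theorem RH_tendsto_one_general (θ σ : ℝ) (hθ : 0 < θ) (t s : ℝ) :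
    Filter.Tendsto (fun H => RH θ σ H t s) (nhdsWithin 1 (Set.Iio 1))
      (nhds (σ^2 * θ^2 * (1 - Real.exp (-s/θ)) * (1 - Real.exp (-t/θ)))) := by
  rw [← RH_one hθ.ne']
  exact (continuousAt_RH_s6 θ σ t s).tendsto.mono_left nhdsWithin_le_nhds

/-- for every `t, s ≥ 0`, `R_H(t,s) → σ²θ²(1−e^{−s/θ})(1−e^{−t/θ})` as `H → 1⁻`. -/
theorem RH_tendsto_one (θ σ : ℝ) (hθ : 0 < θ) (t s : ℝ) (ht : 0 ≤ t) (hs : 0 ≤ s) :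
    Filter.Tendsto (fun H => RH θ σ H t s) (nhdsWithin 1 (Set.Iio 1))
      (nhds (σ^2 * θ^2 * (1 - Real.exp (-s/θ)) * (1 - Real.exp (-t/θ)))) :=
  RH_tendsto_one_general θ σ hθ t s
end

section
/- For H ∈ (0,1), θ > 0, σ ∈ ℝ and t ≥ s ≥ 0 define R_H(t,s) = (Hσ²/2) [ −e^{(s−t)/θ} ∫₀^{t−s} e^{z/θ} z^{2H−1} dz + e^{(t−s)/θ} ∫_{t−s}^{t} e^{−z/θ} z^{2H−1} dz − e^{−(t+s)/θ} ∫_{s}^{t} e^{z/θ} z^{2H−1} dz + e^{(s−t)/θ} ∫₀^{s} e^{−z/θ} z^{2H−1} dz + 2 e^{−(t+s)/θ} ∫₀^{t} e^{z/θ} z^{2H−1} dz ], extended to all t,s ≥ 0 by symmetry R_H(t,s) = R_H(s,t). Then for every (t,s) ∈ [0,∞)², lim_{H → 0⁺} R_H(t,s) = 0 if min(s,t) = 0; = (σ²/2) e^{−(t+s)/θ} if s ≠ t and min(s,t) > 0; and = (σ²/2)(1 + e^{−2t/θ}) if s = t > 0. -/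
open MeasureTheory Real Set

/-! Multiplied by `H`, the kernel `z ^ (2H-1)` on `[0, a]` has total mass `a ^ (2H) / 2 → 1/2`,
and this mass concentrates at `0` as `H → 0⁺`. Hence `H ∫₀^a f z * z ^ (2H-1) dz → f 0 / 2` for
every `f` Lipschitz on `[0, a]` (the deviation `|f z - f 0| ≤ K z` only costs `O(H)`), and the same
expression over `[a, b] ⊂ (0, ∞)` tends to `0`. Each of the five integrals in `R_H` is of one of
these two kinds (or vanishes), and the three limits come from collecting the exponential factors. -/

open Filter Topology intervalIntegral
open scoped NNReal

lemma mul_integral_rpow_two_mul_sub_one {H : ℝ} (hH : 0 < H) (a : ℝ) :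
    H * ∫ z in (0:ℝ)..a, z ^ (2*H-1) = a ^ (2*H) / 2 := by
  rw [integral_rpow (Or.inl (by linarith)), sub_add_cancel, zero_rpow (by positivity), sub_zero]
  field_simp

lemma tendsto_mul_integral_mul_rpow_of_abs_le {g : ℝ → ℝ} {a L : ℝ} (ha : 0 ≤ a)
    (hg : ContinuousOn g (Icc 0 a)) (hgL : ∀ z ∈ Icc 0 a, |g z| ≤ L * z) :
    Tendsto (fun H => H * ∫ z in (0:ℝ)..a, g z * z ^ (2*H-1)) (𝓝[>] 0) (𝓝 0) := by
  have hbound : ∀ H > 0, ‖H * ∫ z in (0:ℝ)..a, g z * z ^ (2*H-1)‖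
      ≤ H * (L * (a ^ (2*H+1) / (2*H+1))) := by
    intro H hH
    have hr : -1 < 2*H-1 := by linarith
    rw [Real.norm_eq_abs, abs_mul, abs_of_pos hH]
    gcongr
    calc |∫ z in (0:ℝ)..a, g z * z ^ (2*H-1)|
        ≤ ∫ z in (0:ℝ)..a, |g z * z ^ (2*H-1)| := abs_integral_le_integral_abs ha
      _ ≤ ∫ z in (0:ℝ)..a, L * z ^ (2*H-1+1) := by
          refine integral_mono_on_of_le_Ioo ha ?_ ?_ fun z hz => ?_
          · exact ((intervalIntegrable_rpow' hr).continuousOn_mul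
              (hg.mono (uIcc_of_le ha).le)).abs
          · exact (intervalIntegrable_rpow' (by linarith)).const_mul L
          · rw [abs_mul, abs_of_nonneg (rpow_nonneg hz.1.le _), rpow_add_one hz.1.ne', ← mul_assoc,
              mul_right_comm]
            exact mul_le_mul_of_nonneg_right (hgL z (Ioo_subset_Icc_self hz)) (rpow_nonneg hz.1.le _)
      _ = L * (a ^ (2*H+1) / (2*H+1)) := by
          rw [intervalIntegral.integral_const_mul, sub_add_cancel,
            integral_rpow (Or.inl (by linarith)), zero_rpow (by positivity)]
          ring
  have hlim : Tendsto (fun H : ℝ => H * (L * (a ^ (2*H+1) / (2*H+1)))) (𝓝[>] 0) (𝓝 0) := by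
    have hcont : ContinuousAt (fun H : ℝ => H * (L * (a ^ (2*H+1) / (2*H+1)))) 0 := by
      have hpow := (continuousAt_const_rpow' (a := a) (b := 2*0+1) (by norm_num)).comp
        (f := fun H : ℝ => 2*H+1) (by fun_prop)
      fun_prop (disch := norm_num)
    simpa using hcont.tendsto.mono_left nhdsWithin_le_nhds
  exact squeeze_zero_norm' (eventually_nhdsWithin_of_forall hbound) hlim

lemma LipschitzOnWith.tendsto_mul_integral_mul_rpow {f : ℝ → ℝ} {K : ℝ≥0} {a : ℝ}
    (hf : LipschitzOnWith K f (Icc 0 a)) (ha : 0 < a) :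
    Tendsto (fun H => H * ∫ z in (0:ℝ)..a, f z * z ^ (2*H-1)) (𝓝[>] 0) (𝓝 (f 0 / 2)) := by
  have hsplit : ∀ H > 0, f 0 * (a ^ (2*H) / 2) + H * ∫ z in (0:ℝ)..a, (f z - f 0) * z ^ (2*H-1)
      = H * ∫ z in (0:ℝ)..a, f z * z ^ (2*H-1) := by
    intro H hH
    have hr : -1 < 2*H-1 := by linarith
    have hint : IntervalIntegrable (fun z => f z * z ^ (2*H-1)) volume 0 a :=
      (intervalIntegrable_rpow' hr).continuousOn_mul (hf.continuousOn.mono (uIcc_of_le ha.le).le)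
    simp only [sub_mul]
    rw [integral_sub hint ((intervalIntegrable_rpow' hr).const_mul _),
      intervalIntegral.integral_const_mul, ← mul_integral_rpow_two_mul_sub_one hH]
    ring
  have hpow : Tendsto (fun H : ℝ => a ^ (2*H) / 2) (𝓝[>] 0) (𝓝 (1/2)) := by
    have hcont : ContinuousAt (fun H : ℝ => a ^ (2*H) / 2) 0 :=
      ((continuousAt_const_rpow ha.ne').comp (by fun_prop)).div_const _
    simpa using hcont.tendsto.mono_left nhdsWithin_le_nhds
  have hrem := tendsto_mul_integral_mul_rpow_of_abs_le ha.le
    (hf.continuousOn.sub continuousOn_const) fun z hz => by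
      simpa [Real.dist_eq, abs_of_nonneg hz.1] using
        hf.dist_le_mul z hz 0 ⟨le_rfl, ha.le⟩
  have hsum := (hpow.const_mul (f 0)).add hrem
  rw [mul_one_div, add_zero] at hsum
  exact hsum.congr' (eventually_nhdsWithin_of_forall hsplit)

lemma ContDiff.tendsto_mul_integral_mul_rpow {f : ℝ → ℝ} (hf : ContDiff ℝ 1 f) {a : ℝ}
    (ha : 0 < a) :
    Tendsto (fun H => H * ∫ z in (0:ℝ)..a, f z * z ^ (2*H-1)) (𝓝[>] 0) (𝓝 (f 0 / 2)) := by
  obtain ⟨K, hK⟩ := hf.contDiffOn.exists_lipschitzOnWith one_ne_zero (convex_Icc 0 a) isCompact_Icc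
  exact hK.tendsto_mul_integral_mul_rpow ha

lemma ContDiff.tendsto_mul_integral_mul_rpow_of_pos {f : ℝ → ℝ} (hf : ContDiff ℝ 1 f) {a b : ℝ}
    (ha : 0 < a) (hb : 0 < b) :
    Tendsto (fun H => H * ∫ z in a..b, f z * z ^ (2*H-1)) (𝓝[>] 0) (𝓝 0) := by
  have hint : ∀ H : ℝ, 0 < H → ∀ c, IntervalIntegrable (fun z => f z * z ^ (2*H-1)) volume 0 c :=
    fun H hH c => (intervalIntegrable_rpow' (by linarith)).continuousOn_mul hf.continuous.continuousOn
  have hdiff := (hf.tendsto_mul_integral_mul_rpow hb).sub (hf.tendsto_mul_integral_mul_rpow ha)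
  rw [sub_self] at hdiff
  refine hdiff.congr' (eventually_nhdsWithin_of_forall fun H hH => ?_)
  rw [← mul_sub, integral_interval_sub_left (hint H hH b) (hint H hH a)]

lemma tendsto_RHaux {θ σ t s l₁ l₂ l₃ l₄ l₅ : ℝ}
    (h₁ : Tendsto (fun H => H * ∫ z in (0:ℝ)..(t-s), exp (z/θ) * z ^ (2*H-1)) (𝓝[>] 0) (𝓝 l₁))
    (h₂ : Tendsto (fun H => H * ∫ z in (t-s)..t, exp (-z/θ) * z ^ (2*H-1)) (𝓝[>] 0) (𝓝 l₂))
    (h₃ : Tendsto (fun H => H * ∫ z in s..t, exp (z/θ) * z ^ (2*H-1)) (𝓝[>] 0) (𝓝 l₃))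
    (h₄ : Tendsto (fun H => H * ∫ z in (0:ℝ)..s, exp (-z/θ) * z ^ (2*H-1)) (𝓝[>] 0) (𝓝 l₄))
    (h₅ : Tendsto (fun H => H * ∫ z in (0:ℝ)..t, exp (z/θ) * z ^ (2*H-1)) (𝓝[>] 0) (𝓝 l₅)) :
    Tendsto (fun H => RHaux θ σ H t s) (𝓝[>] 0)
      (𝓝 (σ^2/2 * (-exp ((s-t)/θ) * l₁ + exp ((t-s)/θ) * l₂ - exp (-(t+s)/θ) * l₃
        + exp ((s-t)/θ) * l₄ + 2 * exp (-(t+s)/θ) * l₅))) := by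
  have h := (((((h₁.const_mul (-exp ((s-t)/θ))).add (h₂.const_mul (exp ((t-s)/θ)))).sub
    (h₃.const_mul (exp (-(t+s)/θ)))).add (h₄.const_mul (exp ((s-t)/θ)))).add
    (h₅.const_mul (2 * exp (-(t+s)/θ)))).const_mul (σ^2/2)
  refine h.congr fun H => ?_
  rw [RHaux]
  ring

lemma contDiff_exp_div (θ : ℝ) : ContDiff ℝ 1 fun z => exp (z/θ) := by fun_prop

lemma contDiff_exp_neg_div (θ : ℝ) : ContDiff ℝ 1 fun z => exp (-z/θ) := by fun_prop

lemma tendsto_RHaux_zero_right (θ σ : ℝ) {t : ℝ} (ht : 0 ≤ t) :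
    Tendsto (fun H => RHaux θ σ H t 0) (𝓝[>] 0) (𝓝 0) := by
  rcases ht.eq_or_lt with rfl | ht
  · simp [RHaux]
  convert tendsto_RHaux (σ := σ) (l₁ := 1/2) (l₂ := 0) (l₃ := 1/2) (l₄ := 0) (l₅ := 1/2)
    ?_ ?_ ?_ ?_ ?_ using 2
  · simp only [zero_sub, neg_div, add_zero]
    ring
  · simpa using (contDiff_exp_div θ).tendsto_mul_integral_mul_rpow ht
  · simp
  · simpa using (contDiff_exp_div θ).tendsto_mul_integral_mul_rpow ht
  · simp
  · simpa using (contDiff_exp_div θ).tendsto_mul_integral_mul_rpow ht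

lemma tendsto_RHaux_of_lt (θ σ : ℝ) {t s : ℝ} (hs : 0 < s) (hst : s < t) :
    Tendsto (fun H => RHaux θ σ H t s) (𝓝[>] 0) (𝓝 (σ^2/2 * exp (-(t+s)/θ))) := by
  have hts : 0 < t - s := sub_pos.2 hst
  convert tendsto_RHaux (σ := σ) (l₁ := 1/2) (l₂ := 0) (l₃ := 0) (l₄ := 1/2) (l₅ := 1/2)
    ?_ ?_ ?_ ?_ ?_ using 2
  · ring
  · simpa using (contDiff_exp_div θ).tendsto_mul_integral_mul_rpow hts
  · exact (contDiff_exp_neg_div θ).tendsto_mul_integral_mul_rpow_of_pos hts (hs.trans hst)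
  · exact (contDiff_exp_div θ).tendsto_mul_integral_mul_rpow_of_pos hs (hs.trans hst)
  · simpa using (contDiff_exp_neg_div θ).tendsto_mul_integral_mul_rpow hs
  · simpa using (contDiff_exp_div θ).tendsto_mul_integral_mul_rpow (hs.trans hst)

lemma tendsto_RHaux_self (θ σ : ℝ) {t : ℝ} (ht : 0 < t) :
    Tendsto (fun H => RHaux θ σ H t t) (𝓝[>] 0) (𝓝 (σ^2/2 * (1 + exp (-2*t/θ)))) := by
  convert tendsto_RHaux (σ := σ) (l₁ := 0) (l₂ := 1/2) (l₃ := 0) (l₄ := 1/2) (l₅ := 1/2)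
    ?_ ?_ ?_ ?_ ?_ using 2
  · rw [sub_self, zero_div, exp_zero, ← two_mul, neg_mul_eq_neg_mul]
    ring
  · simp
  · simpa using (contDiff_exp_neg_div θ).tendsto_mul_integral_mul_rpow ht
  · simp
  · simpa using (contDiff_exp_neg_div θ).tendsto_mul_integral_mul_rpow ht
  · simpa using (contDiff_exp_div θ).tendsto_mul_integral_mul_rpow ht

lemma RH_of_le {θ σ H t s : ℝ} (hst : s ≤ t) : RH θ σ H t s = RHaux θ σ H t s := if_pos hst

lemma RH_comm (θ σ H t s : ℝ) : RH θ σ H t s = RH θ σ H s t := by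
  rcases lt_trichotomy s t with h | rfl | h
  · simp [RH, h.le, h.not_ge]
  · rfl
  · simp [RH, h.le, h.not_ge]

theorem RH_tendsto_zero_general (θ σ : ℝ) (t s : ℝ) (ht : 0 ≤ t) (hs : 0 ≤ s) :
    (min s t = 0 →
      Filter.Tendsto (fun H => RH θ σ H t s) (nhdsWithin 0 (Set.Ioi 0)) (nhds 0))
    ∧ (s ≠ t → 0 < min s t →
      Filter.Tendsto (fun H => RH θ σ H t s) (nhdsWithin 0 (Set.Ioi 0))
        (nhds (σ^2/2 * Real.exp (-(t+s)/θ))))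
    ∧ (s = t → 0 < t →
      Filter.Tendsto (fun H => RH θ σ H t s) (nhdsWithin 0 (Set.Ioi 0))
        (nhds (σ^2/2 * (1 + Real.exp (-2*t/θ))))) := by
  refine ⟨fun hmin => ?_, fun hne hmin => ?_, fun hst ht₀ => ?_⟩
  · rcases le_total s t with hst | hts
    · obtain rfl : s = 0 := (min_eq_left hst).symm.trans hmin
      simpa only [RH_of_le hst] using tendsto_RHaux_zero_right θ σ ht
    · obtain rfl : t = 0 := (min_eq_right hts).symm.trans hmin
      simpa only [RH_comm θ σ _ 0, RH_of_le hts] using tendsto_RHaux_zero_right θ σ hs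
  · rcases hne.lt_or_gt with hst | hts
    · simpa only [RH_of_le hst.le] using
        tendsto_RHaux_of_lt θ σ (hmin.trans_le (min_le_left s t)) hst
    · simpa only [RH_comm θ σ _ t, RH_of_le hts.le, add_comm s t] using
        tendsto_RHaux_of_lt θ σ (hmin.trans_le (min_le_right s t)) hts
  · subst hst
    simpa only [RH_of_le le_rfl] using tendsto_RHaux_self θ σ ht₀

/-- for every `t, s ≥ 0`, the limit of `R_H(t,s)` as `H → 0⁺` is
`0` if `min s t = 0`, `(σ²/2)e^{−(t+s)/θ}` if `s ≠ t` and `min s t > 0`, and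
`(σ²/2)(1+e^{−2t/θ})` if `s = t > 0`. -/
theorem RH_tendsto_zero (θ σ : ℝ) (hθ : 0 < θ) (t s : ℝ) (ht : 0 ≤ t) (hs : 0 ≤ s) :
    (min s t = 0 →
      Filter.Tendsto (fun H => RH θ σ H t s) (nhdsWithin 0 (Set.Ioi 0)) (nhds 0))
    ∧ (s ≠ t → 0 < min s t →
      Filter.Tendsto (fun H => RH θ σ H t s) (nhdsWithin 0 (Set.Ioi 0))
        (nhds (σ^2/2 * Real.exp (-(t+s)/θ))))
    ∧ (s = t → 0 < t →
      Filter.Tendsto (fun H => RH θ σ H t s) (nhdsWithin 0 (Set.Ioi 0))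
        (nhds (σ^2/2 * (1 + Real.exp (-2*t/θ))))) :=
  RH_tendsto_zero_general θ σ t s ht hs
end

section
/- Let θ > 0, t > 0, H ∈ (0,1), and let c : [0,∞)² → ℝ be measurable and Lebesgue integrable on [0,t] × [0,s] for every s > 0. Define Φ(s) = e^{−(t+s)/θ} ∫₀ˢ ∫₀ᵗ e^{(u+v)/θ} c(u,v) du dv and g(s) = ∫₀ᵗ e^{u/θ} c(u,s) du. Assume either (𝓛1): the function v ↦ ∫₀ᵗ e^{(u+v)/θ} c(u,v) du belongs to L¹([0,∞)); or (𝓛2'): g is continuous, lim_{s → +∞} ∫₀ˢ ∫₀ᵗ e^{(u+v)/θ} c(u,v) du dv = +∞ and lim_{s → +∞} s^{2−2H} g(s) = 0. Then lim_{s → +∞} s^{2−2H} Φ(s) = 0, i.e., the forcing contribution to the covariance is o(s^{2H−2}) as s → +∞. -/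
open MeasureTheory Real Filter Topology Asymptotics Set

/-!
Write `Φ(s) = e^{-t/θ} e^{-s/θ} F(s)` with `F(s) = ∫₀ˢ f` and `f(v) = ∫₀ᵗ e^{(u+v)/θ} c(u,v) du`;
it suffices to show `F = o(Ψ)` for `Ψ(s) = e^{s/θ} s^{-(2-2H)}`, which tends to `+∞`.
Under 𝓛1, `F` is bounded. Under 𝓛2', `f(v) = e^{v/θ} g(v) = o(Ψ)` and `Ψ' ~ Ψ / θ`, so
`f = o(Ψ')`, and integrating this relation (an integral form of L'Hôpital's rule) gives `F = o(Ψ)`.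
-/

theorem isLittleO_intervalIntegral_of_isLittleO_deriv {f Ψ Ψ' : ℝ → ℝ} {a : ℝ}
    (hf : ∀ s ≥ a, IntervalIntegrable f volume a s)
    (hΨ : ∀ᶠ x in atTop, HasDerivAt Ψ (Ψ' x) x) (hΨ'_nonneg : ∀ᶠ x in atTop, 0 ≤ Ψ' x)
    (hΨ_top : Tendsto Ψ atTop atTop) (hfΨ' : f =o[atTop] Ψ') :
    (fun s => ∫ v in a..s, f v) =o[atTop] Ψ := by
  refine isLittleO_iff.2 fun ε hε => ?_
  have hε2 : 0 < ε / 2 := half_pos hε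
  obtain ⟨M, hM⟩ := eventually_atTop.1 ((eventually_ge_atTop a).and
    (hΨ.and (hΨ'_nonneg.and (hfΨ'.bound hε2))))
  have hMa : a ≤ M := (hM M le_rfl).1
  have hfM : ∀ s ≥ M, IntervalIntegrable f volume M s := fun s hs =>
    (hf M hMa).symm.trans (hf s (hMa.trans hs))
  have htail : ∀ s ≥ M, |∫ v in M..s, f v| ≤ ε / 2 * Ψ s - ε / 2 * Ψ M := fun s hs =>
    calc |∫ v in M..s, f v| ≤ ∫ v in M..s, |f v| :=
          intervalIntegral.abs_integral_le_integral_abs hs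
      _ ≤ ε / 2 * Ψ s - ε / 2 * Ψ M := by
        refine intervalIntegral.integral_le_sub_of_hasDeriv_right_of_le hs
          (fun x hx => ((hM x hx.1).2.1.continuousAt.const_mul _).continuousWithinAt)
          (fun x hx => ((hM x hx.1.le).2.1.const_mul (ε / 2)).hasDerivWithinAt)
          ((intervalIntegrable_iff_integrableOn_Icc_of_le hs).1 (hfM s hs).abs)
          (fun x hx => ?_)
        obtain ⟨-, -, hnonneg, hbound⟩ := hM x hx.1.le
        rwa [Real.norm_eq_abs, Real.norm_eq_abs, abs_of_nonneg hnonneg] at hbound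
  set I := ∫ v in a..M, f v
  filter_upwards [eventually_ge_atTop M, hΨ_top.eventually_ge_atTop 0,
    hΨ_top.eventually_ge_atTop ((|I| - ε / 2 * Ψ M) / (ε / 2))] with s hsM hΨs hΨs'
  have hsplit : ∫ v in a..s, f v = I + ∫ v in M..s, f v :=
    (intervalIntegral.integral_add_adjacent_intervals (hf M hMa) (hfM s hsM)).symm
  rw [div_le_iff₀' hε2] at hΨs'
  rw [Real.norm_eq_abs, Real.norm_eq_abs, abs_of_nonneg hΨs, hsplit]
  linarith [abs_add_le I (∫ v in M..s, f v), htail s hsM]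

theorem tendsto_exp_div_mul_rpow_neg_atTop {θ : ℝ} (hθ : 0 < θ) (a : ℝ) :
    Tendsto (fun x => exp (x / θ) * x ^ (-a)) atTop atTop := by
  refine (tendsto_exp_mul_div_rpow_atTop a θ⁻¹ (inv_pos.2 hθ)).congr' ?_
  filter_upwards [eventually_ge_atTop 0] with x hx
  rw [rpow_neg hx, div_eq_mul_inv, inv_mul_eq_div]

theorem tendsto_inv_sub_div_atTop (θ a : ℝ) :
    Tendsto (fun x : ℝ => θ⁻¹ - a / x) atTop (𝓝 θ⁻¹) := by
  simpa using (tendsto_const_nhds (x := θ⁻¹)).sub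
    ((tendsto_const_nhds (x := a)).div_atTop tendsto_id)

theorem hasDerivAt_exp_div_mul_rpow_neg (θ a : ℝ) {x : ℝ} (hx : 0 < x) :
    HasDerivAt (fun x => exp (x / θ) * x ^ (-a))
      (exp (x / θ) * x ^ (-a) * (θ⁻¹ - a / x)) x := by
  have hexp := ((hasDerivAt_id x).div_const θ).exp
  have hpow := hasDerivAt_rpow_const (p := -a) (Or.inl hx.ne')
  refine (hexp.mul hpow).congr_deriv ?_
  rw [rpow_sub_one hx.ne']
  simp only [id]
  ring

theorem isBigO_exp_div_mul_rpow_neg_deriv {θ : ℝ} (hθ : 0 < θ) (a : ℝ) :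
    (fun x => exp (x / θ) * x ^ (-a)) =O[atTop]
      fun x => exp (x / θ) * x ^ (-a) * (θ⁻¹ - a / x) := by
  have hfactor := tendsto_inv_sub_div_atTop θ a
  have hone : (fun _ => (1 : ℝ)) =O[atTop] fun x : ℝ => θ⁻¹ - a / x :=
    (isBigO_const_const 1 (inv_ne_zero hθ.ne') atTop).trans
      ((isEquivalent_const_iff_tendsto (inv_ne_zero hθ.ne')).2 hfactor).symm.isBigO
  simpa using (isBigO_refl (fun x => exp (x / θ) * x ^ (-a)) atTop).mul hone

theorem isLittleO_intervalIntegral_exp_div_mul {θ a : ℝ} (hθ : 0 < θ) {g : ℝ → ℝ}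
    (hg : ∀ s ≥ 0, IntervalIntegrable g volume 0 s) (hga : g =o[atTop] fun x => x ^ (-a)) :
    (fun s => ∫ v in 0..s, exp (v / θ) * g v) =o[atTop] fun s => exp (s / θ) * s ^ (-a) := by
  refine isLittleO_intervalIntegral_of_isLittleO_deriv
    (fun s hs => (hg s hs).continuousOn_mul (by fun_prop))
    ((eventually_gt_atTop 0).mono fun x hx => hasDerivAt_exp_div_mul_rpow_neg θ a hx) ?_
    (tendsto_exp_div_mul_rpow_neg_atTop hθ a)
    (((isBigO_refl _ _).mul_isLittleO hga).trans_isBigO (isBigO_exp_div_mul_rpow_neg_deriv hθ a))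
  filter_upwards [eventually_gt_atTop 0,
    (tendsto_inv_sub_div_atTop θ a).eventually (lt_mem_nhds (inv_pos.2 hθ))] with x hx hpos
  positivity

theorem isLittleO_intervalIntegral_of_integrableOn_Ioi {f Ψ : ℝ → ℝ} {a : ℝ}
    (hf : IntegrableOn f (Ioi a)) (hΨ : Tendsto Ψ atTop atTop) :
    (fun s => ∫ v in a..s, f v) =o[atTop] Ψ :=
  ((intervalIntegral_tendsto_integral_Ioi a hf tendsto_id).isBigO_one ℝ).trans_isLittleO
    ((isLittleO_one_left_iff ℝ).2 (tendsto_norm_atTop_atTop.comp hΨ))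

theorem isLittleO_rpow_neg_of_tendsto_rpow_mul {g : ℝ → ℝ} {a : ℝ}
    (hg : Tendsto (fun s => s ^ a * g s) atTop (𝓝 0)) : g =o[atTop] fun s => s ^ (-a) := by
  refine (isLittleO_iff_tendsto' ?_).2 (hg.congr' ?_)
  · filter_upwards [eventually_gt_atTop 0] with s hs h
    exact absurd h (rpow_pos_of_pos hs _).ne'
  · filter_upwards [eventually_ge_atTop 0] with s hs
    rw [rpow_neg hs, div_inv_eq_mul, mul_comm]

theorem tendsto_rpow_mul_exp_mul_of_isLittleO {θ a t : ℝ} {F : ℝ → ℝ}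
    (hF : F =o[atTop] fun s => exp (s / θ) * s ^ (-a)) :
    Tendsto (fun s => s ^ a * (exp (-(t + s) / θ) * F s)) atTop (𝓝 0) := by
  have hratio : Tendsto (fun s => exp (-t / θ) * (F s / (exp (s / θ) * s ^ (-a)))) atTop (𝓝 0) := by
    simpa using hF.tendsto_div_nhds_zero.const_mul (exp (-t / θ))
  refine hratio.congr' ?_
  filter_upwards [eventually_gt_atTop 0] with s hs
  have hsplit : exp (-(t + s) / θ) = exp (-t / θ) / exp (s / θ) := by
    rw [← exp_sub]; ring_nf
  rw [hsplit, rpow_neg hs.le]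
  have := (rpow_pos_of_pos hs a).ne'
  field_simp

theorem forcing_cov_little_o_general
    (θ t H : ℝ) (hθ : 0 < θ)
    (c : ℝ → ℝ → ℝ)
    (hyp :
      IntegrableOn
          (fun v => ∫ u in (0:ℝ)..t, Real.exp ((u+v)/θ) * c u v) (Set.Ici 0)
      ∨ (ContinuousOn (fun s => ∫ u in (0:ℝ)..t, Real.exp (u/θ) * c u s) (Set.Ici 0)
          ∧ Filter.Tendsto
              (fun s => ∫ v in (0:ℝ)..s, ∫ u in (0:ℝ)..t, Real.exp ((u+v)/θ) * c u v)
              Filter.atTop Filter.atTop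
          ∧ Filter.Tendsto
              (fun s => s ^ (2-2*H) * ∫ u in (0:ℝ)..t, Real.exp (u/θ) * c u s)
              Filter.atTop (nhds 0))) :
    Filter.Tendsto
      (fun s => s ^ (2-2*H) * (Real.exp (-(t+s)/θ) *
        ∫ v in (0:ℝ)..s, ∫ u in (0:ℝ)..t, Real.exp ((u+v)/θ) * c u v))
      Filter.atTop (nhds 0) := by
  apply tendsto_rpow_mul_exp_mul_of_isLittleO
  rcases hyp with hL1 | ⟨hg_cont, -, hg_decay⟩
  · exact isLittleO_intervalIntegral_of_integrableOn_Ioi (hL1.mono_set Ioi_subset_Ici_self)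
      (tendsto_exp_div_mul_rpow_neg_atTop hθ _)
  · have hfactor : ∀ v, ∫ u in (0:ℝ)..t, exp ((u + v) / θ) * c u v
        = exp (v / θ) * ∫ u in (0:ℝ)..t, exp (u / θ) * c u v := fun v => by
      rw [← intervalIntegral.integral_const_mul]
      congr 1 with u
      rw [add_div, exp_add]; ring
    simp_rw [hfactor]
    refine isLittleO_intervalIntegral_exp_div_mul hθ (fun s hs => ?_)
      (isLittleO_rpow_neg_of_tendsto_rpow_mul hg_decay)
    exact (hg_cont.mono (by rw [uIcc_of_le hs]; exact Icc_subset_Ici_self)).intervalIntegrable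

/-- under hypothesis 𝓛1 or 𝓛2', the forcing-term contribution to the
covariance is `o(s^{2H−2})` as `s → +∞`. -/
theorem forcing_cov_little_o
    (θ t H : ℝ) (hθ : 0 < θ) (ht : 0 < t) (hH : H ∈ Set.Ioo (0:ℝ) 1)
    (c : ℝ → ℝ → ℝ) (hcmeas : Measurable (Function.uncurry c))
    (hcint : ∀ s > (0:ℝ),
      IntegrableOn (fun p : ℝ × ℝ => c p.1 p.2) (Set.Icc 0 t ×ˢ Set.Icc 0 s))
    (hyp :
      IntegrableOn
          (fun v => ∫ u in (0:ℝ)..t, Real.exp ((u+v)/θ) * c u v) (Set.Ici 0)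
      ∨ (ContinuousOn (fun s => ∫ u in (0:ℝ)..t, Real.exp (u/θ) * c u s) (Set.Ici 0)
          ∧ Filter.Tendsto
              (fun s => ∫ v in (0:ℝ)..s, ∫ u in (0:ℝ)..t, Real.exp ((u+v)/θ) * c u v)
              Filter.atTop Filter.atTop
          ∧ Filter.Tendsto
              (fun s => s ^ (2-2*H) * ∫ u in (0:ℝ)..t, Real.exp (u/θ) * c u s)
              Filter.atTop (nhds 0))) :
    Filter.Tendsto
      (fun s => s ^ (2-2*H) * (Real.exp (-(t+s)/θ) *
        ∫ v in (0:ℝ)..s, ∫ u in (0:ℝ)..t, Real.exp ((u+v)/θ) * c u v))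
      Filter.atTop (nhds 0) :=
  forcing_cov_little_o_general θ t H hθ c hyp
end
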